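/- On a path of n+1 vertices v_0,...,v_n, the distribution placing 1 pebble on each of v_1,...,v_n and 2 pebbles on v_0 is solvable; moreover every vertex of the underlying graph at distance at most 1 from the path's reachable set can be reached, so adding the single unit of 2 pebbles to the all-ones row distribution increases the number of reachable vertices by an amount that grows linearly in n. Hence the marginal covering ratio of adding a unit of size 2 can be arbitrarily large. -/

import Mathlib

/-!
Without the extra pair no move is possible, so exactly the `n` row vertices are reachable.
With two pebbles at the origin a pebble can be pushed along the row: moving two pebbles from
`(k,0)` onto the single pebble at `(k+1,0)` leaves two pebbles there, so each `(k,0)` in turn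
carries two pebbles and can send one to `(k,1)`; this gives `2n` reachable vertices.
Since the counts are `Set.ncard`s, the new reachable set must also be shown finite: the potential
`∑ v, D v * 2 ^ ‖v‖₁` never increases under a move, so only vertices `v` with `2 ^ ‖v‖₁` at most
the initial potential are reachable.
-/

/-- The infinite square grid: vertices `ℤ × ℤ`, adjacency iff Manhattan distance 1. -/
def gridGraph : SimpleGraph (ℤ × ℤ) where
  Adj p q := (p.1 - q.1).natAbs + (p.2 - q.2).natAbs = 1
  symm := ⟨by intro p q h; omega⟩
  loopless := ⟨by intro p h; simp at h⟩

/-- A pebbling move: remove two pebbles from `u`, add one pebble at a neighbour `v`. -/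
def PebblingMove {V : Type*} [DecidableEq V] (G : SimpleGraph V) (D D' : V → ℕ) : Prop :=
  ∃ u v, G.Adj u v ∧ 2 ≤ D u ∧
    D' = Function.update (Function.update D u (D u - 2)) v (D v + 1)

/-- `t` is reachable under `D`: some sequence of pebbling moves puts a pebble on `t`. -/
def PebbleReachable {V : Type*} [DecidableEq V] (G : SimpleGraph V) (D : V → ℕ) (t : V) : Prop :=
  ∃ D', Relation.ReflTransGen (PebblingMove G) D D' ∧ 1 ≤ D' t

/-- `D` is solvable if every vertex is reachable under it. -/
def SolvableDistr {V : Type*} [DecidableEq V] (G : SimpleGraph V) (D : V → ℕ) : Prop :=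
  ∀ t, PebbleReachable G D t

open scoped ENNReal

namespace PebbleReachable

variable {V : Type*} [DecidableEq V] {G : SimpleGraph V} {D D' : V → ℕ} {t : V}

theorem of_one_le (h : 1 ≤ D t) : PebbleReachable G D t :=
  ⟨D, .refl, h⟩

theorem of_reflTransGen (hDD' : Relation.ReflTransGen (PebblingMove G) D D')
    (h : PebbleReachable G D' t) : PebbleReachable G D t :=
  let ⟨E, hD'E, hE⟩ := h
  ⟨E, hDD'.trans hD'E, hE⟩

theorem of_adj {u : V} (hadj : G.Adj u t) (hu : 2 ≤ D u) : PebbleReachable G D t :=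
  ⟨_, .single ⟨u, t, hadj, hu, rfl⟩, by simp⟩

theorem iff_of_le_one (hD : ∀ v, D v ≤ 1) : PebbleReachable G D t ↔ 1 ≤ D t := by
  refine ⟨fun ⟨E, hDE, hE⟩ => ?_, of_one_le⟩
  rcases hDE.cases_head with rfl | ⟨_, ⟨u, _, _, hu, _⟩, _⟩
  · exact hE
  · exact absurd (hD u) (by omega)

end PebbleReachable

section Path

variable {V : Type*} [DecidableEq V] {G : SimpleGraph V} {D : V → ℕ}

theorem exists_reflTransGen_two_le_of_path {f : ℕ → V} (hf : Function.Injective f) {n : ℕ}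
    (hadj : ∀ k < n, G.Adj (f k) (f (k + 1))) (h₀ : 2 ≤ D (f 0))
    (h₁ : ∀ j, 1 ≤ j → j ≤ n → 1 ≤ D (f j)) :
    ∀ k ≤ n, ∃ D', Relation.ReflTransGen (PebblingMove G) D D' ∧ 2 ≤ D' (f k) ∧
      ∀ j, k < j → j ≤ n → 1 ≤ D' (f j) := by
  intro k
  induction k with
  | zero => exact fun _ => ⟨D, .refl, h₀, fun j hj => h₁ j hj⟩
  | succ k ih =>
    intro hk
    obtain ⟨D', hDD', htwo, hone⟩ := ih (by omega)
    refine ⟨_, hDD'.tail ⟨f k, f (k + 1), hadj k (by omega), htwo, rfl⟩,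
      by simpa using hone (k + 1) (by omega) hk, ?_⟩
    intro j hj hjn
    have hjk : f j ≠ f k := hf.ne (by omega)
    have hjk' : f j ≠ f (k + 1) := hf.ne (by omega)
    simpa [Function.update_of_ne hjk, Function.update_of_ne hjk'] using hone j (by omega) hjn

end Path

section Potential

variable {V : Type*} {h : V → ℕ} {D D' : V → ℕ}

/-- Valued in `ℝ≥0∞`, so that it is defined for distributions of infinite support. -/
noncomputable def pebblePotential (h : V → ℕ) (D : V → ℕ) : ℝ≥0∞ :=
  ∑' v, (D v : ℝ≥0∞) * 2 ^ h v

theorem pebblePotential_ne_top (hD : (Function.support D).Finite) : pebblePotential h D ≠ ∞ := by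
  rw [pebblePotential, tsum_eq_sum (s := hD.toFinset) (by simp)]
  exact ENNReal.sum_ne_top.2 fun v _ => by finiteness

variable [DecidableEq V]

theorem pebblePotential_update_update_add {u v : V} (hvu : v ≠ u) (hu : 2 ≤ D u) :
    pebblePotential h (Function.update (Function.update D u (D u - 2)) v (D v + 1)) +
      2 * 2 ^ h u = pebblePotential h D + 2 ^ h v := by
  unfold pebblePotential
  rw [← tsum_ite_eq u (fun _ => (2 * 2 ^ h u : ℝ≥0∞)), ← tsum_ite_eq v (fun _ => (2 ^ h v : ℝ≥0∞)),
    ← ENNReal.tsum_add, ← ENNReal.tsum_add]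
  congr 1
  funext p
  by_cases hpv : p = v
  · subst hpv
    simp only [Function.update_self, Nat.cast_add, Nat.cast_one, hvu, if_true, if_false, add_zero]
    ring
  by_cases hpu : p = u
  · subst hpu
    simp only [Function.update_of_ne hpv, Function.update_self, if_true, if_neg hpv, add_zero]
    rw [← add_mul]
    norm_cast
    rw [Nat.sub_add_cancel hu]
  · simp [hpu, hpv]

variable {G : SimpleGraph V}

theorem pebblePotential_le_of_move (hh : ∀ u v, G.Adj u v → h v ≤ h u + 1)
    (hm : PebblingMove G D D') : pebblePotential h D' ≤ pebblePotential h D := by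
  obtain ⟨u, v, hadj, hu, rfl⟩ := hm
  have hgain : (2 : ℝ≥0∞) ^ h v ≤ 2 * 2 ^ h u := by
    rw [← pow_succ']
    exact pow_le_pow_right₀ (by norm_num) (hh u v hadj)
  refine ENNReal.le_of_add_le_add_right (a := 2 * 2 ^ h u) (by finiteness) ?_
  calc _ = pebblePotential h D + 2 ^ h v := pebblePotential_update_update_add hadj.ne.symm hu
    _ ≤ pebblePotential h D + 2 * 2 ^ h u := by gcongr

theorem pebblePotential_le_of_reflTransGen (hh : ∀ u v, G.Adj u v → h v ≤ h u + 1)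
    (hDD' : Relation.ReflTransGen (PebblingMove G) D D') :
    pebblePotential h D' ≤ pebblePotential h D := by
  induction hDD' with
  | refl => exact le_rfl
  | tail _ hm ih => exact (pebblePotential_le_of_move hh hm).trans ih

theorem PebbleReachable.pow_le_pebblePotential (hh : ∀ u v, G.Adj u v → h v ≤ h u + 1) {t : V}
    (ht : PebbleReachable G D t) : 2 ^ h t ≤ pebblePotential h D := by
  obtain ⟨E, hDE, hE⟩ := ht
  calc (2 : ℝ≥0∞) ^ h t ≤ E t * 2 ^ h t := le_mul_of_one_le_left' (by exact_mod_cast hE)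
    _ ≤ pebblePotential h E := ENNReal.le_tsum t
    _ ≤ pebblePotential h D := pebblePotential_le_of_reflTransGen hh hDE

theorem finite_setOf_pebbleReachable (hh : ∀ u v, G.Adj u v → h v ≤ h u + 1)
    (hh_fin : ∀ N, {v | h v ≤ N}.Finite) (hD : (Function.support D).Finite) :
    {t | PebbleReachable G D t}.Finite := by
  obtain ⟨N, hN⟩ := ENNReal.exists_nat_gt (pebblePotential_ne_top (h := h) hD)
  refine (hh_fin N).subset fun t ht => ?_
  have hpow : 2 ^ h t < N := by
    exact_mod_cast (ht.pow_le_pebblePotential hh).trans_lt hN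
  exact (Nat.lt_two_pow_self.trans hpow).le

end Potential

section Grid

theorem gridGraph.natAbs_add_natAbs_le_of_adj {p q : ℤ × ℤ} (hpq : gridGraph.Adj p q) :
    q.1.natAbs + q.2.natAbs ≤ p.1.natAbs + p.2.natAbs + 1 := by
  have : (p.1 - q.1).natAbs + (p.2 - q.2).natAbs = 1 := hpq
  omega

theorem finite_setOf_natAbs_add_natAbs_le (N : ℕ) :
    {p : ℤ × ℤ | p.1.natAbs + p.2.natAbs ≤ N}.Finite :=
  (Finset.Icc (-(N : ℤ), -(N : ℤ)) (N, N)).finite_toSet.subset <| by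
    rintro ⟨x, y⟩ (hxy : x.natAbs + y.natAbs ≤ N)
    simp only [Finset.coe_Icc, Set.mem_Icc, Prod.mk_le_mk]
    omega

theorem gridGraph.finite_setOf_pebbleReachable {D : ℤ × ℤ → ℕ}
    (hD : (Function.support D).Finite) : {t | PebbleReachable gridGraph D t}.Finite :=
  _root_.finite_setOf_pebbleReachable (h := fun p => p.1.natAbs + p.2.natAbs)
    (fun _ _ => gridGraph.natAbs_add_natAbs_le_of_adj) finite_setOf_natAbs_add_natAbs_le hD

theorem gridGraph.Icc_subset_setOf_pebbleReachable {D : ℤ × ℤ → ℕ} {n : ℕ}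
    (h₀ : 2 ≤ D (0, 0)) (h₁ : ∀ k : ℕ, 1 ≤ k → k ≤ n → 1 ≤ D (k, 0)) :
    ↑(Finset.Icc (1 : ℤ) n ×ˢ Finset.Icc (0 : ℤ) 1) ⊆ {t | PebbleReachable gridGraph D t} := by
  rintro ⟨x, y⟩ hxy
  simp only [Finset.coe_product, Finset.coe_Icc, Set.mem_prod, Set.mem_Icc] at hxy
  obtain ⟨⟨hx₁, hxn⟩, hy₀, hy₁⟩ := hxy
  lift x to ℕ using by omega
  obtain ⟨D', hDD', htwo, -⟩ := exists_reflTransGen_two_le_of_path (G := gridGraph)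
    (f := fun k : ℕ => ((k : ℤ), (0 : ℤ))) (fun a b hab => by simpa using hab)
    (fun k _ => by simp [gridGraph]) h₀ h₁ x (by omega)
  obtain rfl | rfl : y = 0 ∨ y = 1 := by omega
  · exact .of_one_le (h₁ x (by omega) (by omega))
  · exact .of_reflTransGen hDD' (.of_adj (by simp [gridGraph]) htwo)

end Grid

section Row

def rowDistr (n : ℕ) : ℤ × ℤ → ℕ := fun p => if p.2 = 0 ∧ 1 ≤ p.1 ∧ p.1 ≤ (n : ℤ) then 1 else 0

theorem setOf_pebbleReachable_rowDistr (n : ℕ) :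
    {w | PebbleReachable gridGraph (rowDistr n) w} = ↑(Finset.Icc (1 : ℤ) n ×ˢ {(0 : ℤ)}) := by
  have hle : ∀ p, rowDistr n p ≤ 1 := fun p => by unfold rowDistr; split_ifs <;> omega
  ext ⟨x, y⟩
  rw [Set.mem_ofPred_eq, PebbleReachable.iff_of_le_one hle]
  simp only [rowDistr, Finset.coe_product, Finset.coe_Icc, Finset.coe_singleton, Set.mem_prod,
    Set.mem_Icc, Set.mem_singleton_iff]
  split_ifs <;> omega

theorem ncard_setOf_pebbleReachable_rowDistr (n : ℕ) :
    {w | PebbleReachable gridGraph (rowDistr n) w}.ncard = n := by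
  rw [setOf_pebbleReachable_rowDistr, Set.ncard_coe_finset, Finset.card_product, Int.card_Icc,
    Finset.card_singleton]
  omega

end Row

theorem marginal_covering_ratio_unbounded (n : ℕ) :
    let D : ℤ × ℤ → ℕ := fun p => if p.2 = 0 ∧ 1 ≤ p.1 ∧ p.1 ≤ (n : ℤ) then 1 else 0
    let DU : ℤ × ℤ → ℕ := fun p => D p + (if p = (0, 0) then 2 else 0)
    {w | PebbleReachable gridGraph D w}.ncard = n ∧
    {w | PebbleReachable gridGraph D w}.ncard + n ≤
      {w | PebbleReachable gridGraph DU w}.ncard := by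
  intro D DU
  have hcard : {w | PebbleReachable gridGraph D w}.ncard = n :=
    ncard_setOf_pebbleReachable_rowDistr n
  have hsub : ↑(Finset.Icc (1 : ℤ) n ×ˢ Finset.Icc (0 : ℤ) 1) ⊆
      {w | PebbleReachable gridGraph DU w} :=
    gridGraph.Icc_subset_setOf_pebbleReachable (by simp [DU]) fun k hk hkn => by
      simp [DU, D, hk, hkn, Nat.one_le_iff_ne_zero.mp hk]
  have hsupp : Function.support DU ⊆ ↑(Finset.Icc ((0 : ℤ), (0 : ℤ)) (n, 0)) := by
    rintro ⟨x, y⟩ hxy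
    simp only [Function.mem_support, DU, D, Prod.mk.injEq] at hxy
    simp only [Finset.coe_Icc, Set.mem_Icc, Prod.mk_le_mk]
    split_ifs at hxy <;> omega
  refine ⟨hcard, ?_⟩
  calc _ = (↑(Finset.Icc (1 : ℤ) n ×ˢ Finset.Icc (0 : ℤ) 1) : Set (ℤ × ℤ)).ncard := by
        rw [hcard, Set.ncard_coe_finset, Finset.card_product, Int.card_Icc, Int.card_Icc]
        simp only [add_sub_cancel_right, Int.toNat_natCast, show (1 + 1 - 0 : ℤ).toNat = 2 from rfl]
        omega
    _ ≤ _ := Set.ncard_le_ncard hsub <|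
        gridGraph.finite_setOf_pebbleReachable ((Finset.finite_toSet _).subset hsupp)
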